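/- arXiv:2202.00873 — 3 statements merged into one kernel-verified Lean document; each statement's English description precedes it below -/
import Mathlib

section
/- Let $g:\mathbb{N}\to\mathbb{R}$ be a nonnegative multiplicative function, and suppose there exist constants $A, B \geq 0$ and positive functions $h_1, h_2$ on $(1,\infty)$ with $h_1$ increasing, such that for all $x > 1$: (i) $\sum_{p \leq x} g(p)\log p \leq A x h_1(x)$, and (ii) $\sum_{p}\sum_{\alpha \geq 2} \frac{g(p^\alpha)}{p^\alpha}\log(p^\alpha) \leq B h_2(x)$. Then for all $x > 1$, $\sum_{n \leq x} g(n) \leq (A h_1(x) + B h_2(x) + 1) \frac{x}{\log x} \sum_{n \leq x} \frac{g(n)}{n}$. -/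
/-!
Split `(∑ g n) log x = ∑ g n log (x / n) + ∑ g n log n`. The first sum is at most
`x ∑ g n / n` since `log t ≤ t`. For the second, multiplicativity gives
`g n log n = ∑_{p^a ∥ n} g (p^a) log (p^a) g (n / p^a)`, so it is at most
`∑_{p^a m ≤ x} g (p^a) log (p^a) g m`. The terms with `a = 1`, summed over `p ≤ x / m` for
fixed `m`, are bounded by (i) at `x / m` and the monotonicity of `h₁`; for `a ≥ 2` the inner sum
satisfies `∑_{m ≤ x / p^a} g m ≤ (x / p^a) ∑_{n ≤ x} g n / n`, which leaves the series of (ii).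
-/

open Finset
open scoped Classical

theorem sum_Icc_filter_dvd_comp_div {M : Type*} [AddCommMonoid M] (f : ℕ → M) (N : ℕ) {d : ℕ}
    (hd : 0 < d) :
    ∑ n ∈ (Icc 1 N).filter (d ∣ ·), f (n / d) = ∑ m ∈ Icc 1 (N / d), f m := by
  refine sum_nbij' (· / d) (d * ·) ?_ ?_ ?_ ?_ fun _ _ => rfl
  · intro n hn
    simp only [mem_filter, mem_Icc] at hn ⊢
    obtain ⟨⟨h1, hN⟩, k, rfl⟩ := hn
    rw [Nat.mul_div_cancel_left k hd, Nat.le_div_iff_mul_le hd, mul_comm]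
    exact ⟨Nat.pos_of_mul_pos_left h1, hN⟩
  · intro m hm
    simp only [mem_filter, mem_Icc, Nat.le_div_iff_mul_le hd] at hm ⊢
    exact ⟨⟨Nat.mul_pos hd hm.1, by linarith⟩, dvd_mul_right d m⟩
  · intro n hn
    simp only [mem_filter] at hn
    exact Nat.mul_div_cancel' hn.2
  · intro m _
    exact Nat.mul_div_cancel_left m hd

theorem sum_Icc_div_comm {M : Type*} [AddCommMonoid M] (N : ℕ) (P : ℕ → Prop) [DecidablePred P]
    (f : ℕ → ℕ → M) :
    ∑ p ∈ (Icc 1 N).filter P, ∑ m ∈ Icc 1 (N / p), f p m =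
      ∑ m ∈ Icc 1 N, ∑ p ∈ (Icc 1 (N / m)).filter P, f p m := by
  refine sum_comm' fun p m => ?_
  simp only [mem_filter, mem_Icc]
  constructor
  · rintro ⟨⟨⟨h1, -⟩, hP⟩, hm, hmp⟩
    rw [Nat.le_div_iff_mul_le h1] at hmp
    rw [Nat.le_div_iff_mul_le hm]
    exact ⟨⟨⟨h1, by linarith⟩, hP⟩, hm, by nlinarith⟩
  · rintro ⟨⟨⟨h1, hp⟩, hP⟩, hm, -⟩
    rw [Nat.le_div_iff_mul_le hm] at hp
    rw [Nat.le_div_iff_mul_le h1]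
    exact ⟨⟨⟨h1, by nlinarith⟩, hP⟩, hm, by linarith⟩

theorem mul_log_eq_sum_primeFactors {g : ℕ → ℝ}
    (hgm : ∀ m n : ℕ, Nat.Coprime m n → g (m * n) = g m * g n) {n : ℕ} (hn : n ≠ 0) :
    g n * Real.log n = ∑ p ∈ n.primeFactors,
      g (p ^ n.factorization p) * Real.log ((p : ℝ) ^ n.factorization p) *
        g (n / p ^ n.factorization p) := by
  have hlog : Real.log n = ∑ p ∈ n.primeFactors, Real.log ((p : ℝ) ^ n.factorization p) := by
    rw [← Real.log_prod fun p hp =>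
      pow_ne_zero _ (Nat.cast_ne_zero.2 (Nat.pos_of_mem_primeFactors hp).ne')]
    exact_mod_cast congrArg (fun m : ℕ => Real.log m) (Nat.prod_factorization_pow_eq_self hn).symm
  rw [hlog, mul_sum]
  refine sum_congr rfl fun p hp => ?_
  have hcop :=
    (Nat.coprime_ordCompl (Nat.prime_of_mem_primeFactors hp) hn).pow_left (n.factorization p)
  rw [← Nat.ordProj_mul_ordCompl_eq_self n p, hgm _ _ hcop, Nat.ordProj_mul_ordCompl_eq_self]
  ring

theorem mul_log_le_sum_primePow_dvd {g : ℕ → ℝ} (hg0 : ∀ n, 0 ≤ g n)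
    (hgm : ∀ m n : ℕ, Nat.Coprime m n → g (m * n) = g m * g n) {N n : ℕ} (hn : n ∈ Icc 1 N) :
    g n * Real.log n ≤ ∑ p ∈ (Icc 1 N).filter Nat.Prime, ∑ a ∈ Icc 1 N,
      if p ^ a ∣ n then g (p ^ a) * Real.log ((p : ℝ) ^ a) * g (n / p ^ a) else 0 := by
  obtain ⟨hn1, hnN⟩ := mem_Icc.1 hn
  have hn0 : n ≠ 0 := by omega
  set G : ℕ → ℕ → ℝ := fun p a =>
    if p ^ a ∣ n then g (p ^ a) * Real.log ((p : ℝ) ^ a) * g (n / p ^ a) else 0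
  have hG : ∀ p, p.Prime → ∀ a, 0 ≤ G p a := fun p hp a => by
    have := Real.log_nonneg (one_le_pow₀ (n := a) (Nat.one_le_cast.2 hp.one_le))
    have := hg0 (p ^ a)
    have := hg0 (n / p ^ a)
    simp only [G]
    split_ifs <;> positivity
  calc g n * Real.log n = ∑ p ∈ n.primeFactors, G p (n.factorization p) := by
        rw [mul_log_eq_sum_primeFactors hgm hn0]
        exact sum_congr rfl fun p _ => (if_pos (Nat.ordProj_dvd n p)).symm
    _ ≤ ∑ p ∈ n.primeFactors, ∑ a ∈ Icc 1 N, G p a := by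
        refine sum_le_sum fun p hp => ?_
        have hp' := Nat.prime_of_mem_primeFactors hp
        refine single_le_sum (fun a _ => hG p hp' a) (mem_Icc.2 ⟨?_, ?_⟩)
        · exact hp'.factorization_pos_of_dvd hn0 (Nat.dvd_of_mem_primeFactors hp)
        · exact (Nat.factorization_lt p hn0).le.trans hnN
    _ ≤ _ := by
        refine sum_le_sum_of_subset_of_nonneg (fun p hp => ?_)
          fun p hp _ => sum_nonneg fun a _ => hG p (mem_filter.1 hp).2 a
        have hp' := Nat.prime_of_mem_primeFactors hp
        exact mem_filter.2
          ⟨mem_Icc.2 ⟨hp'.one_le, (Nat.le_of_mem_primeFactors hp).trans hnN⟩, hp'⟩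

theorem sum_mul_log_le_sum_primePow {g : ℕ → ℝ} (hg0 : ∀ n, 0 ≤ g n)
    (hgm : ∀ m n : ℕ, Nat.Coprime m n → g (m * n) = g m * g n) (N : ℕ) :
    ∑ n ∈ Icc 1 N, g n * Real.log n ≤ ∑ p ∈ (Icc 1 N).filter Nat.Prime, ∑ a ∈ Icc 1 N,
      g (p ^ a) * Real.log ((p : ℝ) ^ a) * ∑ m ∈ Icc 1 (N / p ^ a), g m := by
  calc ∑ n ∈ Icc 1 N, g n * Real.log n
      ≤ ∑ n ∈ Icc 1 N, ∑ p ∈ (Icc 1 N).filter Nat.Prime, ∑ a ∈ Icc 1 N,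
          if p ^ a ∣ n then g (p ^ a) * Real.log ((p : ℝ) ^ a) * g (n / p ^ a) else 0 :=
        sum_le_sum fun n hn => mul_log_le_sum_primePow_dvd hg0 hgm hn
    _ = _ := by
        rw [sum_comm]
        refine sum_congr rfl fun p hp => ?_
        rw [sum_comm]
        refine sum_congr rfl fun a _ => ?_
        rw [← sum_filter, ← mul_sum,
          sum_Icc_filter_dvd_comp_div g N (pow_pos (mem_filter.1 hp).2.pos a)]

theorem sum_Icc_floor_le_mul_sum_div {g : ℕ → ℝ} (hg0 : ∀ n, 0 ≤ g n) {y : ℝ} (hy : 0 ≤ y) :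
    ∑ m ∈ Icc 1 ⌊y⌋₊, g m ≤ y * ∑ m ∈ Icc 1 ⌊y⌋₊, g m / m := by
  rw [mul_sum]
  refine sum_le_sum fun m hm => ?_
  obtain ⟨hm1, hmy⟩ := mem_Icc.1 hm
  have hm0 : (0 : ℝ) < m := by exact_mod_cast hm1
  calc g m = m * (g m / m) := by field_simp
    _ ≤ y * (g m / m) :=
        mul_le_mul_of_nonneg_right ((Nat.le_floor_iff hy).1 hmy) (div_nonneg (hg0 m) hm0.le)

theorem sum_Icc_div_le_div_mul {g : ℕ → ℝ} (hg0 : ∀ n, 0 ≤ g n) {x : ℝ} (hx : 0 ≤ x) {d : ℕ}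
    (hd : 0 < d) :
    ∑ m ∈ Icc 1 (⌊x⌋₊ / d), g m ≤ x / d * ∑ n ∈ Icc 1 ⌊x⌋₊, g n / n := by
  rw [← Nat.floor_div_natCast]
  refine (sum_Icc_floor_le_mul_sum_div hg0 (by positivity)).trans
    (mul_le_mul_of_nonneg_left (sum_le_sum_of_subset_of_nonneg ?_ fun n _ _ => ?_)
      (by positivity))
  · exact Icc_subset_Icc_right (Nat.floor_le_floor (div_le_self hx (by exact_mod_cast hd)))
  · exact div_nonneg (hg0 n) n.cast_nonneg

theorem sum_mul_log_div_le {g : ℕ → ℝ} (hg0 : ∀ n, 0 ≤ g n) {x : ℝ} (hx : 0 ≤ x) :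
    ∑ n ∈ Icc 1 ⌊x⌋₊, g n * Real.log (x / n) ≤ x * ∑ n ∈ Icc 1 ⌊x⌋₊, g n / n := by
  rw [mul_sum]
  refine sum_le_sum fun n _ => ?_
  calc g n * Real.log (x / n) ≤ g n * (x / n) :=
        mul_le_mul_of_nonneg_left (Real.log_le_self (by positivity)) (hg0 n)
    _ = x * (g n / n) := by ring

theorem sum_prime_mul_log_floor_le {g : ℕ → ℝ} {A : ℝ} (hA : 0 ≤ A)
    {h₁ : ℝ → ℝ} (hh₁mono : MonotoneOn h₁ (Set.Ioi 1))
    (hyp1 : ∀ x : ℝ, 1 < x →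
      ∑ p ∈ (Icc 1 ⌊x⌋₊).filter Nat.Prime, g p * Real.log p ≤ A * x * h₁ x)
    {x y : ℝ} (hx : 1 < x) (hh₁x : 0 ≤ h₁ x) (hy : 0 ≤ y) (hyx : y ≤ x) :
    ∑ p ∈ (Icc 1 ⌊y⌋₊).filter Nat.Prime, g p * Real.log p ≤ A * y * h₁ x := by
  rcases lt_or_ge 1 y with hy1 | hy1
  · exact (hyp1 y hy1).trans (mul_le_mul_of_nonneg_left (hh₁mono hy1 hx hyx) (by positivity))
  · have hempty : (Icc 1 ⌊y⌋₊).filter Nat.Prime = ∅ :=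
      filter_false_of_mem fun p hp hpp => by
        have := (mem_Icc.1 hp).2.trans (Nat.floor_le_one_of_le_one hy1)
        linarith [hpp.two_le]
    rw [hempty, sum_empty]
    positivity

theorem sum_prime_mul_sum_le {g : ℕ → ℝ} (hg0 : ∀ n, 0 ≤ g n) {A : ℝ} (hA : 0 ≤ A)
    {h₁ : ℝ → ℝ} (hh₁mono : MonotoneOn h₁ (Set.Ioi 1))
    (hyp1 : ∀ x : ℝ, 1 < x →
      ∑ p ∈ (Icc 1 ⌊x⌋₊).filter Nat.Prime, g p * Real.log p ≤ A * x * h₁ x)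
    {x : ℝ} (hx : 1 < x) (hh₁x : 0 ≤ h₁ x) :
    ∑ p ∈ (Icc 1 ⌊x⌋₊).filter Nat.Prime, g p * Real.log p * ∑ m ∈ Icc 1 (⌊x⌋₊ / p), g m ≤
      A * x * h₁ x * ∑ n ∈ Icc 1 ⌊x⌋₊, g n / n := by
  simp_rw [mul_sum]
  rw [sum_Icc_div_comm]
  refine sum_le_sum fun m hm => ?_
  have hm0 : (0 : ℝ) < m := by exact_mod_cast (mem_Icc.1 hm).1
  have hmx : x / m ≤ x := div_le_self (by linarith) (by exact_mod_cast (mem_Icc.1 hm).1)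
  calc ∑ p ∈ (Icc 1 (⌊x⌋₊ / m)).filter Nat.Prime, g p * Real.log p * g m
      = (∑ p ∈ (Icc 1 ⌊x / m⌋₊).filter Nat.Prime, g p * Real.log p) * g m := by
        rw [Nat.floor_div_natCast, sum_mul]
    _ ≤ A * (x / m) * h₁ x * g m := mul_le_mul_of_nonneg_right
        (sum_prime_mul_log_floor_le hA hh₁mono hyp1 hx hh₁x (by positivity) hmx) (hg0 m)
    _ = A * x * h₁ x * (g m / m) := by ring

noncomputable def primePowLogTerm (g : ℕ → ℝ) (pa : ℕ × ℕ) : ℝ :=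
  if pa.1.Prime ∧ 2 ≤ pa.2 then
    g (pa.1 ^ pa.2) / (pa.1 : ℝ) ^ pa.2 * Real.log ((pa.1 : ℝ) ^ pa.2) else 0

theorem sum_primePow_mul_sum_le {g : ℕ → ℝ} (hg0 : ∀ n, 0 ≤ g n)
    (hsumm : Summable (primePowLogTerm g)) {x : ℝ} (hx : 0 ≤ x) :
    ∑ p ∈ (Icc 1 ⌊x⌋₊).filter Nat.Prime, ∑ a ∈ Ioc 1 ⌊x⌋₊,
        g (p ^ a) * Real.log ((p : ℝ) ^ a) * ∑ m ∈ Icc 1 (⌊x⌋₊ / p ^ a), g m ≤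
      x * (∑ n ∈ Icc 1 ⌊x⌋₊, g n / n) * ∑' pa, primePowLogTerm g pa := by
  set D := ∑ n ∈ Icc 1 ⌊x⌋₊, g n / n
  have hD : 0 ≤ D := sum_nonneg fun n _ => div_nonneg (hg0 n) n.cast_nonneg
  have hterm : ∀ p, p.Prime → ∀ a, 2 ≤ a →
      g (p ^ a) * Real.log ((p : ℝ) ^ a) * ∑ m ∈ Icc 1 (⌊x⌋₊ / p ^ a), g m ≤
        x * D * primePowLogTerm g (p, a) := fun p hp a ha => by
    have hpa : (0 : ℝ) < (p : ℝ) ^ a := pow_pos (by exact_mod_cast hp.pos) a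
    have := hg0 (p ^ a)
    have := Real.log_nonneg (one_le_pow₀ (n := a) (Nat.one_le_cast.2 hp.one_le))
    calc g (p ^ a) * Real.log ((p : ℝ) ^ a) * ∑ m ∈ Icc 1 (⌊x⌋₊ / p ^ a), g m
        ≤ g (p ^ a) * Real.log ((p : ℝ) ^ a) * (x / (p : ℝ) ^ a * D) := by
          refine mul_le_mul_of_nonneg_left ?_ (by positivity)
          exact_mod_cast sum_Icc_div_le_div_mul hg0 hx (pow_pos hp.pos a)
      _ = x * D * primePowLogTerm g (p, a) := by
          simp only [primePowLogTerm, if_pos (And.intro hp ha)]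
          field_simp
  have hnonneg : ∀ pa, 0 ≤ primePowLogTerm g pa := fun pa => by
    simp only [primePowLogTerm]
    split_ifs with h
    · have := hg0 (pa.1 ^ pa.2)
      have := Real.log_nonneg (one_le_pow₀ (n := pa.2) (Nat.one_le_cast.2 h.1.one_le))
      positivity
    · exact le_rfl
  calc _ ≤ ∑ pa ∈ (Icc 1 ⌊x⌋₊).filter Nat.Prime ×ˢ Ioc 1 ⌊x⌋₊, x * D * primePowLogTerm g pa := by
        rw [sum_product]
        exact sum_le_sum fun p hp => sum_le_sum fun a ha =>
          hterm p (mem_filter.1 hp).2 a (mem_Ioc.1 ha).1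
    _ = x * D * ∑ pa ∈ (Icc 1 ⌊x⌋₊).filter Nat.Prime ×ˢ Ioc 1 ⌊x⌋₊, primePowLogTerm g pa :=
        (mul_sum _ _ _).symm
    _ ≤ x * D * ∑' pa, primePowLogTerm g pa :=
        mul_le_mul_of_nonneg_left (hsumm.sum_le_tsum _ fun pa _ => hnonneg pa) (by positivity)

theorem stmt_0_general (g : ℕ → ℝ) (hg0 : ∀ n, 0 ≤ g n)
    (hgm : ∀ m n : ℕ, Nat.Coprime m n → g (m * n) = g m * g n)
    (A B : ℝ) (hA : 0 ≤ A) (h₁ h₂ : ℝ → ℝ)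
    (hh₁pos : ∀ x : ℝ, 1 < x → 0 < h₁ x)
    (hh₁mono : MonotoneOn h₁ (Set.Ioi (1 : ℝ)))
    (hyp1 : ∀ x : ℝ, 1 < x →
      ∑ p ∈ (Finset.Icc 1 ⌊x⌋₊).filter Nat.Prime, g p * Real.log p ≤ A * x * h₁ x)
    (hsumm : Summable fun pa : ℕ × ℕ =>
      if pa.1.Prime ∧ 2 ≤ pa.2 then
        g (pa.1 ^ pa.2) / (pa.1 : ℝ) ^ pa.2 * Real.log ((pa.1 : ℝ) ^ pa.2) else 0)
    (hyp2 : ∀ x : ℝ, 1 < x →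
      (∑' pa : ℕ × ℕ, if pa.1.Prime ∧ 2 ≤ pa.2 then
        g (pa.1 ^ pa.2) / (pa.1 : ℝ) ^ pa.2 * Real.log ((pa.1 : ℝ) ^ pa.2) else 0)
        ≤ B * h₂ x) :
    ∀ x : ℝ, 1 < x →
      ∑ n ∈ Finset.Icc 1 ⌊x⌋₊, g n ≤
        (A * h₁ x + B * h₂ x + 1) * (x / Real.log x) *
          ∑ n ∈ Finset.Icc 1 ⌊x⌋₊, g n / n := by
  intro x hx
  have hx0 : 0 ≤ x := by linarith
  set D := ∑ n ∈ Icc 1 ⌊x⌋₊, g n / n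
  have hD : 0 ≤ D := sum_nonneg fun n _ => div_nonneg (hg0 n) n.cast_nonneg
  have hlog_split : (∑ n ∈ Icc 1 ⌊x⌋₊, g n) * Real.log x =
      ∑ n ∈ Icc 1 ⌊x⌋₊, g n * Real.log (x / n) + ∑ n ∈ Icc 1 ⌊x⌋₊, g n * Real.log n := by
    rw [sum_mul, ← sum_add_distrib]
    refine sum_congr rfl fun n hn => ?_
    rw [Real.log_div (by linarith) (Nat.cast_ne_zero.2 (Nat.one_le_iff_ne_zero.1 (mem_Icc.1 hn).1))]
    ring
  have hprime_powers : ∑ n ∈ Icc 1 ⌊x⌋₊, g n * Real.log n ≤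
      A * x * h₁ x * D + x * D * (B * h₂ x) := by
    refine (sum_mul_log_le_sum_primePow hg0 hgm _).trans ?_
    simp_rw [← add_sum_Ioc_eq_sum_Icc (Nat.one_le_floor_iff x |>.2 hx.le), sum_add_distrib,
      pow_one]
    exact add_le_add (sum_prime_mul_sum_le hg0 hA hh₁mono hyp1 hx (hh₁pos x hx).le)
      ((sum_primePow_mul_sum_le hg0 hsumm hx0).trans
        (mul_le_mul_of_nonneg_left (hyp2 x hx) (by positivity)))
  rw [mul_comm _ D, ← mul_div_assoc, mul_div_assoc', le_div_iff₀ (Real.log_pos hx),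
    hlog_split]
  linarith [sum_mul_log_div_le hg0 hx0]

theorem stmt_0 (g : ℕ → ℝ) (hg0 : ∀ n, 0 ≤ g n) (hg1 : g 1 = 1)
    (hgm : ∀ m n : ℕ, Nat.Coprime m n → g (m * n) = g m * g n)
    (A B : ℝ) (hA : 0 ≤ A) (hB : 0 ≤ B) (h₁ h₂ : ℝ → ℝ)
    (hh₁pos : ∀ x : ℝ, 1 < x → 0 < h₁ x) (hh₂pos : ∀ x : ℝ, 1 < x → 0 < h₂ x)
    (hh₁mono : MonotoneOn h₁ (Set.Ioi (1 : ℝ)))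
    (hyp1 : ∀ x : ℝ, 1 < x →
      ∑ p ∈ (Finset.Icc 1 ⌊x⌋₊).filter Nat.Prime, g p * Real.log p ≤ A * x * h₁ x)
    (hsumm : Summable fun pa : ℕ × ℕ =>
      if pa.1.Prime ∧ 2 ≤ pa.2 then
        g (pa.1 ^ pa.2) / (pa.1 : ℝ) ^ pa.2 * Real.log ((pa.1 : ℝ) ^ pa.2) else 0)
    (hyp2 : ∀ x : ℝ, 1 < x →
      (∑' pa : ℕ × ℕ, if pa.1.Prime ∧ 2 ≤ pa.2 then
        g (pa.1 ^ pa.2) / (pa.1 : ℝ) ^ pa.2 * Real.log ((pa.1 : ℝ) ^ pa.2) else 0)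
        ≤ B * h₂ x) :
    ∀ x : ℝ, 1 < x →
      ∑ n ∈ Finset.Icc 1 ⌊x⌋₊, g n ≤
        (A * h₁ x + B * h₂ x + 1) * (x / Real.log x) *
          ∑ n ∈ Finset.Icc 1 ⌊x⌋₊, g n / n :=
  stmt_0_general g hg0 hgm A B hA h₁ h₂ hh₁pos hh₁mono hyp1 hsumm hyp2
end

section
/- The number of squarefull positive integers $n \leq x$ is $O(x^{1/2})$ for $x \geq 1$. -/
open scoped Classical

lemma sqfull_decomp (n : ℕ) (hn : 0 < n) (h : ∀ p : ℕ, p.Prime → p ∣ n → p ^ 2 ∣ n) :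
    ∃ a c : ℕ, 0 < a ∧ 0 < c ∧ n = a ^ 3 * c ^ 2 := by
  obtain ⟨a, b, ha, hb, hab, hsq⟩ := Nat.sq_mul_squarefree_of_pos hn
  have hadvb : a ∣ b := by
    rw [← Nat.factorization_le_iff_dvd ha.ne' hb.ne']
    intro p
    rcases Nat.eq_zero_or_pos (a.factorization p) with h0 | hpos
    · simp [h0]
    have hpsup : p ∈ a.factorization.support := Finsupp.mem_support_iff.mpr hpos.ne'
    have hp : p.Prime := Nat.prime_of_mem_primeFactors (by
      rwa [← Nat.support_factorization])
    have hpa : p ∣ a := Nat.dvd_of_factorization_pos hpos.ne'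
    have hadvn : a ∣ n := Dvd.intro_left _ hab
    have hp2 : p ^ 2 ∣ n := h p hp (hpa.trans hadvn)
    have hpb : p ∣ b := by
      by_contra hpb
      have hcop : Nat.Coprime (p ^ 2) (b ^ 2) :=
        Nat.Coprime.pow _ _ ((hp.coprime_iff_not_dvd).mpr hpb)
      have hp2a : p ^ 2 ∣ a := hcop.dvd_of_dvd_mul_left (hab ▸ hp2)
      exact hp.not_isUnit (hsq p (by simpa [pow_two] using hp2a))
    have h1 : a.factorization p ≤ 1 := hsq.natFactorization_le_one p
    have h2 : 0 < b.factorization p := hp.factorization_pos_of_dvd hb.ne' hpb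
    omega
  obtain ⟨c, hc⟩ := hadvb
  have hcpos : 0 < c := by
    rcases Nat.eq_zero_or_pos c with rfl | hcp
    · simp [hc] at hb
    · exact hcp
  exact ⟨a, c, ha, hcpos, by rw [← hab, hc]; ring⟩

theorem stmt_6 :
    ∃ C > 0, ∀ x : ℝ, 1 ≤ x →
      (((Finset.Icc 1 ⌊x⌋₊).filter
        (fun n => ∀ p : ℕ, p.Prime → p ∣ n → p ^ 2 ∣ n)).card : ℝ) ≤
        C * Real.sqrt x := by
  set f : ℕ → ℝ := fun a => (a : ℝ) ^ (-(3/2) : ℝ) with hf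
  have hsumm : Summable f := by
    rw [hf]
    rw [Real.summable_nat_rpow]
    norm_num
  have hfnonneg : ∀ a, 0 ≤ f a := fun a => Real.rpow_nonneg (Nat.cast_nonneg a) _
  have htsum_nonneg : 0 ≤ ∑' a, f a := tsum_nonneg hfnonneg
  refine ⟨(∑' a, f a) + 1, by linarith, fun x hx => ?_⟩
  set N := ⌊x⌋₊ with hN
  have hNx : (N : ℝ) ≤ x := Nat.floor_le (by linarith)
  have hxnn : (0:ℝ) ≤ x := by linarith
  -- covering
  have hsub : (Finset.Icc 1 N).filter (fun n => ∀ p : ℕ, p.Prime → p ∣ n → p ^ 2 ∣ n) ⊆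
      (Finset.Icc 1 N).biUnion (fun a =>
        (Finset.Icc 1 (Nat.sqrt (N / a ^ 3))).image (fun c => a ^ 3 * c ^ 2)) := by
    intro n hn
    simp only [Finset.mem_filter, Finset.mem_Icc] at hn
    obtain ⟨⟨hn1, hnN⟩, hP⟩ := hn
    obtain ⟨a, c, ha, hc, hnac⟩ := sqfull_decomp n hn1 hP
    simp only [Finset.mem_biUnion, Finset.mem_image, Finset.mem_Icc]
    refine ⟨a, ⟨ha, ?_⟩, c, ⟨hc, ?_⟩, hnac.symm⟩
    · calc a ≤ a ^ 3 := Nat.le_self_pow (by norm_num) a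
        _ ≤ a ^ 3 * c ^ 2 := Nat.le_mul_of_pos_right _ (by positivity)
        _ ≤ N := hnac ▸ hnN
    · rw [Nat.le_sqrt, Nat.le_div_iff_mul_le (by positivity)]
      calc c * c * a ^ 3 = a ^ 3 * c ^ 2 := by ring
        _ ≤ N := hnac ▸ hnN
  have hcard := Finset.card_le_card hsub
  have hcard2 := hcard.trans (Finset.card_biUnion_le)
  have hcard3 : ((Finset.Icc 1 N).filter
      (fun n => ∀ p : ℕ, p.Prime → p ∣ n → p ^ 2 ∣ n)).card ≤
      ∑ a ∈ Finset.Icc 1 N, Nat.sqrt (N / a ^ 3) := by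
    refine hcard2.trans (Finset.sum_le_sum fun a _ => ?_)
    exact (Finset.card_image_le).trans (by simp)
  -- real bound per term
  have hterm : ∀ a ∈ Finset.Icc 1 N, (Nat.sqrt (N / a ^ 3) : ℝ) ≤ Real.sqrt x * f a := by
    intro a haa
    simp only [Finset.mem_Icc] at haa
    have ha1 : 1 ≤ a := haa.1
    have hapos : (0:ℝ) < (a:ℝ) := by exact_mod_cast ha1
    have h1 : (Nat.sqrt (N / a ^ 3) : ℝ) ≤ Real.sqrt ((N / a ^ 3 : ℕ) : ℝ) := by
      rw [Real.le_sqrt (by positivity) (by positivity)]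
      exact_mod_cast Nat.sqrt_le' (N / a ^ 3)
    have h2 : ((N / a ^ 3 : ℕ) : ℝ) ≤ x / (a:ℝ) ^ 3 := by
      rw [le_div_iff₀ (by positivity)]
      calc ((N / a ^ 3 : ℕ) : ℝ) * (a:ℝ) ^ 3 = (((N / a ^ 3) * a ^ 3 : ℕ) : ℝ) := by
            push_cast; ring
        _ ≤ (N : ℝ) := by exact_mod_cast Nat.div_mul_le_self N (a ^ 3)
        _ ≤ x := hNx
    have hsq3 : Real.sqrt ((a:ℝ) ^ 3) = (a:ℝ) ^ ((3:ℝ)/2) := by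
      rw [Real.sqrt_eq_rpow, ← Real.rpow_natCast (a:ℝ) 3, ← Real.rpow_mul hapos.le]
      norm_num
    have h3 : Real.sqrt (x / (a:ℝ) ^ 3) = Real.sqrt x * f a := by
      rw [Real.sqrt_div hxnn, hsq3, hf]
      rw [div_eq_mul_inv, ← Real.rpow_neg hapos.le]
    calc (Nat.sqrt (N / a ^ 3) : ℝ) ≤ Real.sqrt ((N / a ^ 3 : ℕ) : ℝ) := h1
      _ ≤ Real.sqrt (x / (a:ℝ) ^ 3) := Real.sqrt_le_sqrt h2
      _ = Real.sqrt x * f a := h3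
  -- combine
  calc (((Finset.Icc 1 N).filter
      (fun n => ∀ p : ℕ, p.Prime → p ∣ n → p ^ 2 ∣ n)).card : ℝ)
      ≤ ∑ a ∈ Finset.Icc 1 N, (Nat.sqrt (N / a ^ 3) : ℝ) := by exact_mod_cast hcard3
    _ ≤ ∑ a ∈ Finset.Icc 1 N, Real.sqrt x * f a := Finset.sum_le_sum hterm
    _ = Real.sqrt x * ∑ a ∈ Finset.Icc 1 N, f a := by rw [Finset.mul_sum]
    _ ≤ Real.sqrt x * ∑' a, f a := by
        apply mul_le_mul_of_nonneg_left _ (Real.sqrt_nonneg x)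
        exact Summable.sum_le_tsum _ (fun i _ => hfnonneg i) hsumm
    _ ≤ ((∑' a, f a) + 1) * Real.sqrt x := by
        rw [mul_comm]
        exact mul_le_mul_of_nonneg_right (by linarith) (Real.sqrt_nonneg x)
end

section
/- For every $k \geq 2$ and real $x \geq 1$, $\left|\#\{n \leq x : n \text{ is } k\text{-free}\} - \frac{x}{\zeta(k)}\right| = O(x^{1/k})$. -/
open scoped Classical

/-!
The `d` with `d ^ k ∣ n` are exactly the divisors of `∏ p ^ ⌊v_p(n) / k⌋`, so `∑_{d ^ k ∣ n} μ d`
is the indicator of `k`-freeness and `#{n ≤ x | n k-free} = ∑_{d ^ k ≤ x} μ d ⌊x / d ^ k⌋`.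
Dropping the floors costs at most `1` for each of the `≤ x ^ (1/k) + 1` values of `d`, and
completing `∑_{d ^ k ≤ x} μ d / d ^ k` to `1 / ζ(k)` costs `x ∑_{d > x ^ (1/k)} d ^ (-k)`, which is
`O(x ^ (1/k))`.
-/

open Finset ArithmeticFunction
open scoped ArithmeticFunction.Moebius

/-- The largest `d` with `d ^ k ∣ n`, when `n ≠ 0`. -/
noncomputable def kthRootPart (k n : ℕ) : ℕ :=
  (n.factorization.mapRange (· / k) (Nat.zero_div k)).prod (· ^ ·)

lemma factorization_kthRootPart (k n : ℕ) :
    (kthRootPart k n).factorization = n.factorization.mapRange (· / k) (Nat.zero_div k) :=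
  Nat.factorization_prod_pow_eq_self_of_le_factorization <|
    Finsupp.le_def.2 fun _ ↦ Nat.div_le_self _ _

lemma kthRootPart_ne_zero (k n : ℕ) : kthRootPart k n ≠ 0 :=
  Finsupp.prod_ne_zero_iff.2 fun _ hp ↦ pow_ne_zero _ <| Nat.Prime.ne_zero <|
    Nat.prime_of_mem_primeFactors (Nat.support_factorization n ▸ Finsupp.support_mapRange hp)

lemma pow_dvd_iff_dvd_kthRootPart {k n d : ℕ} (hk : k ≠ 0) (hn : n ≠ 0) (hd : d ≠ 0) :
    d ^ k ∣ n ↔ d ∣ kthRootPart k n := by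
  rw [← Nat.factorization_le_iff_dvd (pow_ne_zero k hd) hn,
    ← Nat.factorization_le_iff_dvd hd (kthRootPart_ne_zero k n), factorization_kthRootPart,
    Nat.factorization_pow, Finsupp.le_def, Finsupp.le_def]
  simp [Nat.le_div_iff_mul_le (Nat.pos_of_ne_zero hk), mul_comm]

lemma sum_moebius_filter_pow_dvd {k n : ℕ} (hk : k ≠ 0) (hn : n ≠ 0) :
    ∑ d ∈ n.divisors with d ^ k ∣ n, μ d = if ∀ p, p.Prime → ¬ p ^ k ∣ n then 1 else 0 := by
  have hm := kthRootPart_ne_zero k n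
  have hdiv : {d ∈ n.divisors | d ^ k ∣ n} = (kthRootPart k n).divisors := by
    ext d
    simp only [mem_filter, Nat.mem_divisors]
    constructor
    · rintro ⟨-, hdk⟩
      have hd : d ≠ 0 := by rintro rfl; simp [zero_pow hk, hn] at hdk
      exact ⟨(pow_dvd_iff_dvd_kthRootPart hk hn hd).1 hdk, hm⟩
    · rintro ⟨hdm, -⟩
      have hdk := (pow_dvd_iff_dvd_kthRootPart hk hn (ne_zero_of_dvd_ne_zero hm hdm)).2 hdm
      exact ⟨⟨(dvd_pow_self d hk).trans hdk, hn⟩, hdk⟩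
  rw [hdiv, ← coe_mul_zeta_apply, moebius_mul_coe_zeta, one_apply]
  refine if_congr ?_ rfl rfl
  rw [Nat.eq_one_iff_not_exists_prime_dvd]
  exact forall₂_congr fun p hp ↦ by rw [pow_dvd_iff_dvd_kthRootPart hk hn hp.ne_zero]

lemma card_kFree_eq_sum_moebius {k N B : ℕ} (hk : k ≠ 0) (hNB : N < B ^ k) :
    (#{n ∈ Icc 1 N | ∀ p, p.Prime → ¬ p ^ k ∣ n} : ℤ) =
      ∑ d ∈ range B, μ d * (N / d ^ k : ℕ) := by
  have hfilter : ∀ n ∈ Icc 1 N, {d ∈ range B | d ^ k ∣ n} = {d ∈ n.divisors | d ^ k ∣ n} := by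
    intro n hn
    have hn0 : n ≠ 0 := by simp at hn; omega
    ext d
    simp only [mem_filter, mem_range, Nat.mem_divisors, and_congr_left_iff]
    intro hdk
    refine ⟨fun _ ↦ ⟨(dvd_pow_self d hk).trans hdk, hn0⟩, fun _ ↦ ?_⟩
    refine lt_of_pow_lt_pow_left₀ k (Nat.zero_le _) ?_
    exact (Nat.le_of_dvd (Nat.pos_of_ne_zero hn0) hdk).trans_lt ((mem_Icc.1 hn).2.trans_lt hNB)
  calc (#{n ∈ Icc 1 N | ∀ p, p.Prime → ¬ p ^ k ∣ n} : ℤ)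
      = ∑ n ∈ Icc 1 N, ∑ d ∈ range B with d ^ k ∣ n, μ d := by
        rw [card_filter, Nat.cast_sum]
        refine sum_congr rfl fun n hn ↦ ?_
        rw [hfilter n hn, sum_moebius_filter_pow_dvd hk (by simp at hn; omega)]
        split_ifs <;> rfl
    _ = ∑ d ∈ range B, ∑ n ∈ Icc 1 N with d ^ k ∣ n, μ d := by
        simp only [sum_filter]
        exact sum_comm
    _ = ∑ d ∈ range B, μ d * (N / d ^ k : ℕ) := by
        refine sum_congr rfl fun d _ ↦ ?_
        rw [sum_const, ← Nat.Ioc_filter_dvd_card_eq_div N (d ^ k), nsmul_eq_mul, mul_comm]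
        rfl

lemma tsum_moebius_div_pow_mul_tsum_one_div_pow {k : ℕ} (hk : 2 ≤ k) :
    (∑' n : ℕ, (μ n : ℝ) / (n : ℝ) ^ k) * ∑' n : ℕ, 1 / ((n : ℝ) + 1) ^ k = 1 := by
  have hs : 1 < (k : ℂ).re := by simp; exact_mod_cast hk
  have h := LSeries_one_mul_Lseries_moebius hs
  rw [LSeries_one_eq_riemannZeta hs, zeta_eq_tsum_one_div_nat_add_one_cpow hs, mul_comm] at h
  have hμ : LSeries (fun n ↦ (μ n : ℂ)) k = ↑(∑' n : ℕ, (μ n : ℝ) / (n : ℝ) ^ k) := by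
    rw [LSeries, Complex.ofReal_tsum]
    refine tsum_congr fun n ↦ ?_
    rcases eq_or_ne n 0 with rfl | hn
    · simp
    · rw [LSeries.term_of_ne_zero hn, Complex.cpow_natCast]
      push_cast
      rfl
  have hζ : ∑' n : ℕ, 1 / ((n : ℂ) + 1) ^ (k : ℂ) = ↑(∑' n : ℕ, 1 / ((n : ℝ) + 1) ^ k) := by
    rw [Complex.ofReal_tsum]
    refine tsum_congr fun n ↦ ?_
    push_cast
    rw [Complex.cpow_natCast]
  rw [hμ, hζ] at h
  exact_mod_cast h

lemma abs_moebius_div_pow_le (k d : ℕ) : |(μ d : ℝ) / (d : ℝ) ^ k| ≤ 1 / (d : ℝ) ^ k := by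
  rw [abs_div, abs_pow, Nat.abs_cast]
  exact div_le_div_of_nonneg_right (mod_cast abs_moebius_le_one) (by positivity)

lemma summable_moebius_div_pow {k : ℕ} (hk : 2 ≤ k) :
    Summable fun d : ℕ ↦ (μ d : ℝ) / (d : ℝ) ^ k :=
  .of_norm_bounded (Real.summable_one_div_nat_pow.2 hk) (abs_moebius_div_pow_le k)

lemma tsum_one_div_nat_add_pow_le {k B : ℕ} (hk : 2 ≤ k) (hB : 0 < B) :
    ∑' i : ℕ, 1 / ((i + B : ℕ) : ℝ) ^ k ≤ 2 / (B : ℝ) ^ (k - 1) := by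
  have hterm : ∀ i : ℕ,
      1 / ((i + B : ℕ) : ℝ) ^ k ≤ 1 / (B : ℝ) ^ (k - 2) * (((i + B : ℕ) : ℝ) ^ 2)⁻¹ := by
    intro i
    have hBi : (B : ℝ) ≤ (i + B : ℕ) := by exact_mod_cast Nat.le_add_left B i
    rw [← pow_sub_mul_pow _ hk, one_div, one_div, mul_inv]
    gcongr
  obtain ⟨b, rfl⟩ : ∃ b, B = b + 1 := ⟨B - 1, by omega⟩
  refine Real.tsum_le_of_sum_range_le (fun _ ↦ by positivity) fun n ↦ ?_
  calc ∑ i ∈ range n, 1 / ((i + (b + 1) : ℕ) : ℝ) ^ k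
      ≤ ∑ i ∈ range n, 1 / ((b + 1 : ℕ) : ℝ) ^ (k - 2) * (((i + (b + 1) : ℕ) : ℝ) ^ 2)⁻¹ :=
        sum_le_sum fun i _ ↦ hterm i
    _ = 1 / ((b + 1 : ℕ) : ℝ) ^ (k - 2) * ∑ j ∈ Ioo b (n + (b + 1)), ((j : ℝ) ^ 2)⁻¹ := by
        rw [← mul_sum, ← Ico_add_one_left_eq_Ioo, sum_Ico_eq_sum_range, Nat.add_sub_cancel]
        simp only [add_comm]
    _ ≤ 1 / ((b + 1 : ℕ) : ℝ) ^ (k - 2) * (2 / (b + 1)) := by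
        gcongr
        exact sum_Ioo_inv_sq_le b _
    _ = 2 / ((b + 1 : ℕ) : ℝ) ^ (k - 1) := by
        rw [show k - 1 = k - 2 + 1 by omega, pow_succ]
        push_cast
        field_simp

lemma abs_natFloor_div_sub_div_lt_one {x : ℝ} (hx : 0 ≤ x) (n : ℕ) :
    |((⌊x⌋₊ / n : ℕ) : ℝ) - x / n| < 1 := by
  rw [← Nat.floor_div_natCast, abs_sub_lt_iff]
  have hxn : 0 ≤ x / n := by positivity
  constructor <;> linarith [Nat.floor_le hxn, Nat.lt_floor_add_one (x / n)]

lemma abs_card_kFree_sub_le {k B : ℕ} (hk : 2 ≤ k) {x : ℝ} (hx : 0 ≤ x) (hB : 0 < B)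
    (hxB : x < (B : ℝ) ^ k) :
    |(#{n ∈ Icc 1 ⌊x⌋₊ | ∀ p, p.Prime → ¬ p ^ k ∣ n} : ℝ) -
        x * ∑' d : ℕ, (μ d : ℝ) / (d : ℝ) ^ k| ≤ B + 2 * x / (B : ℝ) ^ (k - 1) := by
  have hNB : ⌊x⌋₊ < B ^ k := by exact_mod_cast (Nat.floor_le hx).trans_lt hxB
  have hcount : (#{n ∈ Icc 1 ⌊x⌋₊ | ∀ p, p.Prime → ¬ p ^ k ∣ n} : ℝ)
      = ∑ d ∈ range B, (μ d : ℝ) * (⌊x⌋₊ / d ^ k : ℕ) := by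
    have h := congrArg (Int.cast : ℤ → ℝ) (card_kFree_eq_sum_moebius (by omega) hNB)
    push_cast at h
    exact h
  rw [hcount, ← (summable_moebius_div_pow hk).sum_add_tsum_nat_add B, mul_add, mul_sum,
    ← sub_sub, ← sum_sub_distrib]
  refine (abs_sub _ _).trans (add_le_add ?_ ?_)
  · calc _ ≤ ∑ d ∈ range B,
            |(μ d : ℝ) * (⌊x⌋₊ / d ^ k : ℕ) - x * ((μ d : ℝ) / (d : ℝ) ^ k)| :=
          abs_sum_le_sum_abs _ _
      _ ≤ ∑ _d ∈ range B, (1 : ℝ) := sum_le_sum fun d _ ↦ by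
          rw [mul_div_left_comm, ← mul_sub, abs_mul, ← Nat.cast_pow]
          exact mul_le_one₀ (mod_cast abs_moebius_le_one) (abs_nonneg _)
            (abs_natFloor_div_sub_div_lt_one hx _).le
      _ = B := by simp
  · have htail : |∑' i : ℕ, (μ (i + B) : ℝ) / ((i + B : ℕ) : ℝ) ^ k| ≤ 2 / (B : ℝ) ^ (k - 1) :=
      (tsum_of_norm_bounded (f := fun i : ℕ ↦ (μ (i + B) : ℝ) / ((i + B : ℕ) : ℝ) ^ k)
        ((summable_nat_add_iff B).2 (Real.summable_one_div_nat_pow.2 hk)).hasSum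
        fun i ↦ abs_moebius_div_pow_le k (i + B)).trans (tsum_one_div_nat_add_pow_le hk hB)
    rw [abs_mul, abs_of_nonneg hx, mul_comm 2 x, mul_div_assoc]
    gcongr

theorem stmt_18 (k : ℕ) (hk : 2 ≤ k) :
    ∃ C > 0, ∀ x : ℝ, 1 ≤ x →
      |(((Finset.Icc 1 ⌊x⌋₊).filter
          (fun n => ∀ p : ℕ, p.Prime → ¬ p ^ k ∣ n)).card : ℝ) -
        x / (∑' n : ℕ, 1 / ((n : ℝ) + 1) ^ k)| ≤
      C * x ^ ((1 : ℝ) / k) := by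
  refine ⟨4, by norm_num, fun x hx ↦ ?_⟩
  set t := x ^ ((1 : ℝ) / k)
  have ht : 1 ≤ t := Real.one_le_rpow hx (by positivity)
  have htx : t ^ k = x := by
    simp only [t, one_div]
    exact Real.rpow_inv_natCast_pow (by linarith) (by omega)
  set B := ⌊t⌋₊ + 1
  have htB : t < B := by simpa [B] using Nat.lt_floor_add_one t
  have hBt : (B : ℝ) ≤ 2 * t := by
    simp only [B]
    push_cast
    linarith [Nat.floor_le (by linarith : 0 ≤ t)]
  have hxB : x < (B : ℝ) ^ k := htx ▸ pow_lt_pow_left₀ htB (by linarith) (by omega)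
  have htail : 2 * x / (B : ℝ) ^ (k - 1) ≤ 2 * t := by
    rw [div_le_iff₀ (by positivity), ← htx, ← pow_sub_mul_pow t (Nat.one_le_of_lt hk), pow_one]
    nlinarith [pow_le_pow_left₀ (by linarith) htB.le (k - 1)]
  rw [div_eq_mul_inv, ← eq_inv_of_mul_eq_one_left (tsum_moebius_div_pow_mul_tsum_one_div_pow hk)]
  linarith [abs_card_kFree_sub_le hk (by linarith) (by simp [B]) hxB]
end
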